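/- arXiv:math/0502582 — 4 statements merged into one kernel-verified Lean document; each statement's English description precedes it below -/
import Mathlib

section
/- The improper integral ∫₀¹ dx/√(x − x³) converges and equals Γ(1/4)² / (2^{3/2}·π^{1/2}), where Γ is the real Gamma function. -/
/-!
Since `1/√(x - x³) = x · t^(-3/4) (1 - t)^(-1/2)` for `t = x²`, the substitution `dt = 2x dx`
turns the integral into half the Beta integral `B(1/4, 1/2) = Γ(1/4) Γ(1/2) / Γ(3/4)`.
Then `Γ(1/2) = √π` and the reflection formula `Γ(1/4) Γ(3/4) = π / sin(π/4) = √2 π` give the value.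
-/

open MeasureTheory Set Real

section Beta

variable {u v : ℝ}

theorem ofReal_rpow_mul_one_sub_rpow {t : ℝ} (ht : t ∈ Ioo 0 1) :
    ((t ^ (u - 1) * (1 - t) ^ (v - 1) : ℝ) : ℂ)
      = (t : ℂ) ^ ((u : ℂ) - 1) * (1 - (t : ℂ)) ^ ((v : ℂ) - 1) := by
  rw [Complex.ofReal_mul, Complex.ofReal_cpow ht.1.le,
    Complex.ofReal_cpow (sub_nonneg.2 ht.2.le)]
  push_cast
  rfl

theorem integrableOn_rpow_mul_one_sub_rpow (hu : 0 < u) (hv : 0 < v) :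
    IntegrableOn (fun t : ℝ => t ^ (u - 1) * (1 - t) ^ (v - 1)) (Ioo 0 1) := by
  have h := Complex.betaIntegral_convergent (u := u) (v := v) (by simpa) (by simpa)
  rw [intervalIntegrable_iff_integrableOn_Ioo_of_le zero_le_one] at h
  refine IntegrableOn.congr_fun h.re (fun t ht => ?_) measurableSet_Ioo
  simp only [RCLike.re_to_complex, ← ofReal_rpow_mul_one_sub_rpow ht, Complex.ofReal_re]

theorem integral_rpow_mul_one_sub_rpow (hu : 0 < u) (hv : 0 < v) :
    ∫ t in Ioo (0 : ℝ) 1, t ^ (u - 1) * (1 - t) ^ (v - 1)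
      = Gamma u * Gamma v / Gamma (u + v) := by
  have h := Complex.betaIntegral_eq_Gamma_mul_div u v (by simpa) (by simpa)
  rw [Complex.betaIntegral, intervalIntegral.integral_of_le zero_le_one,
    integral_Ioc_eq_integral_Ioo,
    ← setIntegral_congr_fun measurableSet_Ioo fun t ht => ofReal_rpow_mul_one_sub_rpow ht,
    integral_complex_ofReal, ← Complex.ofReal_add, Complex.Gamma_ofReal, Complex.Gamma_ofReal,
    Complex.Gamma_ofReal] at h
  exact_mod_cast h

end Beta

section SquareSubstitution

variable {E : Type*} [NormedAddCommGroup E] [NormedSpace ℝ E]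

theorem image_sq_Ioo_zero_one : (fun x : ℝ => x ^ 2) '' Ioo 0 1 = Ioo 0 1 := by
  ext t
  constructor
  · rintro ⟨x, ⟨hx0, hx1⟩, rfl⟩
    exact ⟨by positivity, by nlinarith⟩
  · rintro ⟨ht0, ht1⟩
    refine ⟨√t, ⟨sqrt_pos.2 ht0, ?_⟩, sq_sqrt ht0.le⟩
    simpa using sqrt_lt_sqrt ht0.le ht1

theorem injOn_sq_Ioo_zero_one : InjOn (fun x : ℝ => x ^ 2) (Ioo 0 1) :=
  fun _ hx _ hy h => (pow_left_inj₀ hx.1.le hy.1.le two_ne_zero).1 h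

theorem hasDerivWithinAt_sq_Ioo_zero_one :
    ∀ x ∈ Ioo (0 : ℝ) 1, HasDerivWithinAt (fun x : ℝ => x ^ 2) (2 * x) (Ioo 0 1) x :=
  fun x _ => by simpa using (hasDerivAt_pow 2 x).hasDerivWithinAt

theorem abs_two_mul_smul_eqOn (g : ℝ → E) :
    EqOn (fun x => |2 * x| • g (x ^ 2)) (fun x => (2 * x) • g (x ^ 2)) (Ioo 0 1) :=
  fun x hx => by simp only [abs_of_pos (by linarith [hx.1] : 0 < 2 * x)]

theorem integrableOn_Ioo_zero_one_comp_sq_iff (g : ℝ → E) :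
    IntegrableOn (fun x => (2 * x) • g (x ^ 2)) (Ioo 0 1) ↔ IntegrableOn g (Ioo 0 1) := by
  rw [← integrableOn_congr_fun (abs_two_mul_smul_eqOn g) measurableSet_Ioo,
    ← integrableOn_image_iff_integrableOn_abs_deriv_smul measurableSet_Ioo
      hasDerivWithinAt_sq_Ioo_zero_one injOn_sq_Ioo_zero_one, image_sq_Ioo_zero_one]

theorem integral_Ioo_zero_one_comp_sq (g : ℝ → E) :
    ∫ x in Ioo (0 : ℝ) 1, (2 * x) • g (x ^ 2) = ∫ t in Ioo (0 : ℝ) 1, g t := by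
  rw [← setIntegral_congr_fun measurableSet_Ioo (abs_two_mul_smul_eqOn g),
    ← integral_image_eq_integral_abs_deriv_smul measurableSet_Ioo
      hasDerivWithinAt_sq_Ioo_zero_one injOn_sq_Ioo_zero_one, image_sq_Ioo_zero_one]

end SquareSubstitution

theorem one_div_sqrt_sub_cube_eq {x : ℝ} (hx : x ∈ Ioo 0 1) :
    1 / √(x - x ^ 3)
      = 2⁻¹ * (2 * x) • ((x ^ 2) ^ ((1 / 4 : ℝ) - 1) * (1 - x ^ 2) ^ ((1 / 2 : ℝ) - 1)) := by
  rw [smul_eq_mul]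
  obtain ⟨hx0, hx1⟩ := hx
  have hx2 : 0 < 1 - x ^ 2 := by nlinarith
  have hsq : (x ^ 2) ^ ((1 / 4 : ℝ) - 1) = x ^ (-(3 / 2) : ℝ) := by
    rw [← rpow_natCast, ← rpow_mul hx0.le]
    norm_num
  have hmul : x * x ^ (-(3 / 2) : ℝ) = x ^ (-(1 / 2) : ℝ) := by
    rw [← rpow_one_add' hx0.le (by norm_num)]
    norm_num
  rw [show x - x ^ 3 = x * (1 - x ^ 2) by ring, sqrt_eq_rpow, mul_rpow hx0.le hx2.le, hsq,
    one_div, mul_inv, ← rpow_neg hx0.le, ← rpow_neg hx2.le, ← hmul]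
  norm_num
  ring

theorem Gamma_one_quarter_mul_Gamma_three_quarters :
    Gamma (1 / 4) * Gamma (3 / 4) = √2 * π := by
  have h := Gamma_mul_Gamma_one_sub (1 / 4)
  rw [show π * (1 / 4) = π / 4 by ring, sin_pi_div_four] at h
  norm_num at h
  rw [h, div_eq_iff (by positivity)]
  linear_combination (-π / 2) * sq_sqrt (zero_le_two : (0 : ℝ) ≤ 2)

theorem Gamma_one_quarter_mul_Gamma_one_half_div_Gamma_three_quarters :
    Gamma (1 / 4) * Gamma (1 / 2) / Gamma (3 / 4) = Gamma (1 / 4) ^ 2 / (√2 * √π) := by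
  have hG : Gamma (3 / 4) = √2 * π / Gamma (1 / 4) := by
    rw [← Gamma_one_quarter_mul_Gamma_three_quarters,
      mul_div_cancel_left₀ _ (Gamma_pos_of_pos (by norm_num)).ne']
  have hπ : √π * √π = π := mul_self_sqrt pi_pos.le
  have := sqrt_pos.2 pi_pos
  rw [hG, Gamma_one_half_eq]
  field_simp
  linear_combination hπ

/-- The lemniscatic integral: `∫₀¹ dx/√(x - x³) = Γ(1/4)² / (2^{3/2} π^{1/2})`. -/
theorem integral_one_div_sqrt_x_sub_x_cube :
    IntegrableOn (fun x : ℝ => 1 / Real.sqrt (x - x ^ 3)) (Set.Ioo 0 1) ∧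
    ∫ x in Set.Ioo (0 : ℝ) 1, 1 / Real.sqrt (x - x ^ 3)
      = Real.Gamma (1 / 4) ^ 2 / ((2 : ℝ) ^ ((3 : ℝ) / 2) * Real.pi ^ ((1 : ℝ) / 2)) := by
  have hu : (0 : ℝ) < 1 / 4 := by norm_num
  have hv : (0 : ℝ) < 1 / 2 := by norm_num
  refine ⟨?_, ?_⟩
  · refine IntegrableOn.congr_fun ?_ (fun _ hx => (one_div_sqrt_sub_cube_eq hx).symm)
      measurableSet_Ioo
    exact ((integrableOn_Ioo_zero_one_comp_sq_iff _).2
      (integrableOn_rpow_mul_one_sub_rpow hu hv)).const_mul _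
  · have h2 : (2 : ℝ) ^ ((3 : ℝ) / 2) = 2 * √2 := by
      rw [show (3 : ℝ) / 2 = 1 + 1 / 2 by norm_num, rpow_add two_pos, rpow_one, ← sqrt_eq_rpow]
    rw [setIntegral_congr_fun measurableSet_Ioo fun _ hx => one_div_sqrt_sub_cube_eq hx,
      integral_const_mul, integral_Ioo_zero_one_comp_sq (fun t => t ^ _ * (1 - t) ^ _),
      integral_rpow_mul_one_sub_rpow hu hv, h2, ← sqrt_eq_rpow]
    norm_num [Gamma_one_quarter_mul_Gamma_one_half_div_Gamma_three_quarters]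
    ring
end

section
/- Let a and b be complex numbers with a ≠ 0 and b/a not a nonpositive integer (i.e. b/a ∉ {0, −1, −2, …}), and let k ≥ 2 be an integer. Then the series ∑_{n=0}^∞ ∏_{j=0}^{k-1} 1/(a·n + b + j·a) converges and its sum equals (1/((k−1)·a)) · ∏_{i=0}^{k-2} 1/(i·a + b). -/
/-!
With `x i = a i + b` and `g n = ∏_{j<k-1} 1 / x (n + j)`, the product of the `k` reciprocals is
`(g n - g (n + 1)) / (x (n + k - 1) - x n) = (g n - g (n + 1)) / ((k - 1) a)`,
so the series telescopes to `g 0 / ((k - 1) a)`, because `g n → 0`. It converges absolutely since its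
terms are `O(n⁻ᵏ)` with `k ≥ 2`.
-/

open Filter Finset Asymptotics Topology

theorem hasSum_sub_succ_of_tendsto {G : Type*} [AddCommGroup G] [TopologicalSpace G]
    [IsTopologicalAddGroup G] [T2Space G] {g : ℕ → G} {l : G}
    (hs : Summable fun n => g n - g (n + 1)) (hg : Tendsto g atTop (𝓝 l)) :
    HasSum (fun n => g n - g (n + 1)) (g 0 - l) := by
  rw [hs.hasSum_iff_tendsto_nat]
  simpa only [sum_range_sub'] using tendsto_const_nhds.sub hg

theorem prod_inv_sub_prod_inv_succ {K : Type*} [Field K] (x : ℕ → K) (m n : ℕ)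
    (hn : x n ≠ 0) (hnm : x (n + m) ≠ 0) :
    ∏ j ∈ range m, (x (n + j))⁻¹ - ∏ j ∈ range m, (x (n + 1 + j))⁻¹
      = (x (n + m) - x n) * ∏ j ∈ range (m + 1), (x (n + j))⁻¹ := by
  have hlast := prod_range_succ (fun j => (x (n + j))⁻¹) m
  have hfirst := prod_range_succ' (fun j => (x (n + j))⁻¹) m
  simp only [add_zero, ← add_assoc, add_right_comm n _ 1] at hfirst
  rw [sub_mul]
  nth_rw 1 [hlast]
  rw [hfirst]
  field_simp

variable {𝕜 : Type*} [RCLike 𝕜]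

theorem isBigO_inv_mul_natCast_add {a : 𝕜} (ha : a ≠ 0) (c : 𝕜) :
    (fun n : ℕ => (a * n + c)⁻¹) =O[atTop] fun n : ℕ => (n : ℝ)⁻¹ := by
  have hequiv : (fun n : ℕ => a * n + c) ~[atTop] fun n : ℕ => a * n := by
    refine (isLittleO_const_left (c := c).2 (Or.inr ?_)).congr_left fun n => by simp
    simpa [Function.comp_def, norm_mul] using
      tendsto_natCast_atTop_atTop.const_mul_atTop (norm_pos_iff.2 ha)
  refine hequiv.inv.isBigO.trans (IsBigO.of_bound ‖a⁻¹‖ (Eventually.of_forall fun n => ?_))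
  simp [mul_comm]

theorem isBigO_prod_inv_mul_natCast_add {a : 𝕜} (ha : a ≠ 0) (b : 𝕜) (m : ℕ) :
    (fun n : ℕ => ∏ j ∈ range m, (a * ↑(n + j) + b)⁻¹)
      =O[atTop] fun n : ℕ => ((n : ℝ) ^ m)⁻¹ := by
  have hfactor (j : ℕ) : (fun n : ℕ => (a * ↑(n + j) + b)⁻¹) =O[atTop] fun n : ℕ => (n : ℝ)⁻¹ :=
    (isBigO_inv_mul_natCast_add ha (a * j + b)).congr_left fun n => by push_cast; ring_nf
  simpa [inv_pow] using IsBigO.finsetProd fun j (_ : j ∈ range m) => hfactor j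

theorem summable_prod_inv_mul_natCast_add {a : 𝕜} (ha : a ≠ 0) (b : 𝕜) {m : ℕ} (hm : 2 ≤ m) :
    Summable fun n : ℕ => ∏ j ∈ range m, (a * ↑(n + j) + b)⁻¹ :=
  summable_of_isBigO_nat (Real.summable_nat_pow_inv.2 hm) (isBigO_prod_inv_mul_natCast_add ha b m)

theorem tendsto_prod_inv_mul_natCast_add {a : 𝕜} (ha : a ≠ 0) (b : 𝕜) {m : ℕ} (hm : m ≠ 0) :
    Tendsto (fun n : ℕ => ∏ j ∈ range m, (a * ↑(n + j) + b)⁻¹) atTop (𝓝 0) :=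
  (isBigO_prod_inv_mul_natCast_add ha b m).trans_tendsto <|
    tendsto_inv_atTop_zero.comp ((tendsto_pow_atTop hm).comp tendsto_natCast_atTop_atTop)

/-- Telescoping series: for `a ≠ 0`, `b/a` not a nonpositive integer and `k ≥ 2`,
`∑_{n≥0} ∏_{j=0}^{k-1} 1/(an + b + ja) = (1/((k-1)a)) ∏_{i=0}^{k-2} 1/(ia + b)`. -/
theorem telescoping_series (a b : ℂ) (ha : a ≠ 0)
    (hba : ∀ m : ℤ, m ≤ 0 → b / a ≠ (m : ℂ)) (k : ℕ) (hk : 2 ≤ k) :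
    HasSum (fun n : ℕ => ∏ j ∈ Finset.range k, 1 / (a * (n : ℂ) + b + (j : ℂ) * a))
      (1 / (((k : ℂ) - 1) * a) * ∏ i ∈ Finset.range (k - 1), 1 / ((i : ℂ) * a + b)) := by
  set x : ℕ → ℂ := fun i => a * i + b
  have hx (i : ℕ) : x i ≠ 0 := fun h => hba (-i) (by omega) <| by
    rw [div_eq_iff ha]; push_cast; linear_combination h
  set g : ℕ → ℂ := fun n => ∏ j ∈ range (k - 1), (x (n + j))⁻¹
  set c : ℂ := ((k : ℂ) - 1) * a
  have hc : c ≠ 0 := mul_ne_zero (sub_ne_zero.2 (by exact_mod_cast (by omega : k ≠ 1))) ha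
  have hdiff (n : ℕ) : g n - g (n + 1) = c * ∏ j ∈ range k, (x (n + j))⁻¹ := by
    have hgap : x (n + (k - 1)) - x n = c := by
      simp only [x, c]; push_cast [Nat.cast_sub (by omega : 1 ≤ k)]; ring
    rw [← hgap, ← Nat.sub_add_cancel (by omega : 1 ≤ k)]
    exact prod_inv_sub_prod_inv_succ x (k - 1) n (hx n) (hx _)
  have hsum : HasSum (fun n => g n - g (n + 1)) (g 0) := by
    refine sub_zero (g 0) ▸ hasSum_sub_succ_of_tendsto ?_
      (tendsto_prod_inv_mul_natCast_add ha b (by omega))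
    simpa only [hdiff] using (summable_prod_inv_mul_natCast_add ha b hk).mul_left c
  have hterm (n : ℕ) :
      ∏ j ∈ range k, 1 / (a * (n : ℂ) + b + (j : ℂ) * a) = c⁻¹ * (g n - g (n + 1)) := by
    rw [hdiff, inv_mul_cancel_left₀ hc]
    refine prod_congr rfl fun j _ => ?_
    simp only [x, one_div]; push_cast; ring
  have hg0 : g 0 = ∏ i ∈ range (k - 1), 1 / ((i : ℂ) * a + b) :=
    prod_congr rfl fun i _ => by rw [zero_add, one_div, mul_comm]
  rw [funext hterm, one_div, ← hg0]
  exact hsum.mul_left c⁻¹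
end

section
/- Let a be a nonzero complex number, h ≥ 0 an integer, and x a complex number such that x + j·a ≠ 0 for every integer j with 0 ≤ j ≤ h. Then ∏_{j=0}^{h} 1/(x + j·a) = (1/a^h) · ∑_{i=0}^{h} ((−1)^i/(i!·(h−i)!)) · 1/(x + i·a). -/
/-!
Interpolating the constant `1` at the nodes `v j = -j a` gives, at any `x` off the nodes,
`1 = ∏ j, (x - v j) * ∑ i, w i / (x - v i)` (first barycentric form), with nodal weights
`w i = ∏_{j ≠ i} 1 / (v i - v j)`. For this arithmetic progression
`∏_{j ≠ i} (j - i) = (-1)^i i! (h - i)!`, which produces the coefficients.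
-/

open Finset Polynomial
open scoped Nat

theorem Finset.range_add_one_erase_eq_range_union_Ico {i h : ℕ} (hi : i ≤ h) :
    (range (h + 1)).erase i = range i ∪ Ico (i + 1) (h + 1) := by
  ext j
  simp only [mem_erase, mem_range, mem_union, mem_Ico]
  omega

theorem Finset.prod_range_add_one_erase_natCast_sub {R : Type*} [CommRing R] {i h : ℕ}
    (hi : i ≤ h) :
    ∏ j ∈ (range (h + 1)).erase i, ((j : R) - i) = (-1) ^ i * i ! * (h - i)! := by
  have hdisj : Disjoint (range i) (Ico (i + 1) (h + 1)) := by
    rw [disjoint_left]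
    intro j hj hj'
    simp only [mem_range, mem_Ico] at hj hj'
    omega
  have below : ∏ j ∈ range i, ((j : R) - i) = (-1) ^ i * i ! := by
    have reflect : ∀ j ∈ range i, ((i - 1 - j : ℕ) : R) - i = -((j + 1 : ℕ) : R) := by
      intro j hj
      rw [mem_range] at hj
      push_cast [Nat.sub_sub, Nat.cast_sub (by omega : 1 + j ≤ i)]
      ring
    rw [← prod_range_reflect, prod_congr rfl reflect, prod_neg, card_range, ← Nat.cast_prod,
      prod_range_add_one_eq_factorial]
  have above : ∏ j ∈ Ico (i + 1) (h + 1), ((j : R) - i) = (h - i)! := by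
    rw [prod_Ico_eq_prod_range, ← prod_range_add_one_eq_factorial, Nat.cast_prod]
    refine prod_congr (by congr 1; omega) fun k _ => ?_
    push_cast
    ring
  rw [range_add_one_erase_eq_range_union_Ico hi, prod_union hdisj, below, above, mul_assoc]

namespace Lagrange

variable {F : Type*} [Field F]

theorem prod_inv_sub_eq_sum_nodalWeight_mul_inv_sub {ι : Type*} [DecidableEq ι] {s : Finset ι}
    {v : ι → F} {x : F} (hvs : Set.InjOn v s) (hs : s.Nonempty) (hx : ∀ i ∈ s, x ≠ v i) :
    ∏ i ∈ s, (x - v i)⁻¹ = ∑ i ∈ s, nodalWeight s v i * (x - v i)⁻¹ := by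
  have h := eval_interpolate_not_at_node 1 hx
  simp only [interpolate_one hvs hs, eval_one, Pi.one_apply, mul_one, eval_nodal] at h
  rw [prod_inv_distrib, inv_eq_of_mul_eq_one_right h.symm]

theorem nodalWeight_range_neg_natCast_mul (a : F) {i h : ℕ} (hi : i ≤ h) :
    nodalWeight (range (h + 1)) (fun j : ℕ => -(j * a)) i
      = 1 / a ^ h * ((-1) ^ i / (i ! * (h - i)!)) := by
  have hcard : #((range (h + 1)).erase i) = h := by
    rw [card_erase_of_mem (mem_range.mpr (by omega)), card_range, Nat.add_sub_cancel]
  have factor : ∀ j ∈ (range (h + 1)).erase i, -((i : F) * a) - -(j * a) = (j - i) * a :=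
    fun j _ => by ring
  rw [nodalWeight, prod_inv_distrib, prod_congr rfl factor, prod_mul_distrib, prod_const,
    hcard, prod_range_add_one_erase_natCast_sub hi]
  simp only [mul_inv, div_eq_mul_inv, ← inv_pow, inv_neg_one]
  ring

end Lagrange

/-- Partial fraction decomposition:
`∏_{j=0}^{h} 1/(x + ja) = (1/aʰ) ∑_{i=0}^{h} ((-1)ⁱ/(i!(h-i)!)) · 1/(x + ia)`. -/
theorem partial_fraction_decomposition (a : ℂ) (ha : a ≠ 0) (h : ℕ) (x : ℂ)
    (hx : ∀ j : ℕ, j ≤ h → x + (j : ℂ) * a ≠ 0) :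
    ∏ j ∈ Finset.range (h + 1), 1 / (x + (j : ℂ) * a)
      = (1 / a ^ h) * ∑ i ∈ Finset.range (h + 1),
          ((-1 : ℂ) ^ i / ((Nat.factorial i : ℂ) * (Nat.factorial (h - i) : ℂ)))
            * (1 / (x + (i : ℂ) * a)) := by
  set v : ℕ → ℂ := fun j => -(j * a)
  have sub_v : ∀ j, x - v j = x + j * a := fun j => sub_neg_eq_add _ _
  have hvs : Set.InjOn v (range (h + 1)) := fun j _ k _ hjk => by
    simpa [v, ha] using hjk
  have hxv : ∀ i ∈ range (h + 1), x ≠ v i := fun i hi => by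
    rw [Ne, ← sub_eq_zero, sub_v]
    exact hx i (mem_range_succ_iff.mp hi)
  calc ∏ j ∈ range (h + 1), 1 / (x + j * a)
      = ∏ j ∈ range (h + 1), (x - v j)⁻¹ := by simp only [sub_v, one_div]
    _ = ∑ i ∈ range (h + 1), Lagrange.nodalWeight (range (h + 1)) v i * (x - v i)⁻¹ :=
        Lagrange.prod_inv_sub_eq_sum_nodalWeight_mul_inv_sub hvs nonempty_range_add_one hxv
    _ = _ := by
        rw [mul_sum]
        refine sum_congr rfl fun i hi => ?_
        rw [Lagrange.nodalWeight_range_neg_natCast_mul a (mem_range_succ_iff.mp hi),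
          sub_v, one_div (x + i * a), mul_assoc]
end

section
/- The series ∑_{n=0}^∞ 1/(n² + 1) converges and its sum equals 1/2 + (π/2) · (e^π + e^{−π})/(e^π − e^{−π}). -/
/-!
Evaluate the Mittag-Leffler expansion `π cot (π z) - 1 / z = ∑_{m ≥ 1} 2 z / (z² - m²)` at the
purely imaginary point `z = a i`: there `z² - m² = -(m² + a²)` and `π cot (π a i) = -i π coth (π a)`,
so `∑_{m ≥ 1} 1 / (m² + a²) = π coth (π a) / (2 a) - 1 / (2 a²)`. For `a = 1`, adding the term
`m = 0` gives the claim.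
-/

open Real Complex

lemma Complex.mem_integerComplement_of_im_ne_zero {z : ℂ} (hz : z.im ≠ 0) :
    z ∈ integerComplement :=
  fun ⟨n, hn⟩ => hz (by simp [← hn])

lemma hasSum_one_div_succ_sq_add_sq {a : ℝ} (ha : a ≠ 0) :
    HasSum (fun n : ℕ => 1 / (((n : ℝ) + 1) ^ 2 + a ^ 2))
      (π * Real.cosh (π * a) / Real.sinh (π * a) / (2 * a) - 1 / (2 * a ^ 2)) := by
  have hx : (a * I : ℂ) ∈ integerComplement := mem_integerComplement_of_im_ne_zero (by simpa)
  have hmittag := (summable_cotTerm hx).hasSum_iff.mpr (cot_series_rep' hx).symm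
  have ha' : (a : ℂ) ≠ 0 := ofReal_ne_zero.mpr ha
  have hterm (n : ℕ) : I / (2 * a) * cotTerm (a * I) n =
      ((1 / (((n : ℝ) + 1) ^ 2 + a ^ 2) : ℝ) : ℂ) := by
    have hden : (a * I + (n + 1)) * (a * I - (n + 1)) = -(((n + 1) ^ 2 + a ^ 2 : ℝ) : ℂ) := by
      push_cast
      linear_combination (a : ℂ) ^ 2 * I_sq
    have hpos : ((n : ℝ) + 1) ^ 2 + a ^ 2 ≠ 0 := by positivity
    rw [cotTerm_identity hx, hden]
    field_simp
    rw [I_sq]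
    push_cast
    ring
  have hval : I / (2 * a) * (π * cot (π * (a * I)) - 1 / (a * I)) =
      ((π * Real.cosh (π * a) / Real.sinh (π * a) / (2 * a) - 1 / (2 * a ^ 2) : ℝ) : ℂ) := by
    have hsinh : Complex.sinh (π * a) ≠ 0 := by
      exact_mod_cast Real.sinh_ne_zero.mpr (mul_ne_zero pi_ne_zero ha)
    rw [Complex.cot_eq_cos_div_sin, ← mul_assoc, cos_mul_I, sin_mul_I]
    push_cast
    field_simp
  rw [← Complex.hasSum_ofReal, ← hval]
  exact (hmittag.mul_left _).congr_fun fun n => (hterm n).symm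

lemma hasSum_one_div_sq_add_sq {a : ℝ} (ha : a ≠ 0) :
    HasSum (fun n : ℕ => 1 / ((n : ℝ) ^ 2 + a ^ 2))
      (1 / (2 * a ^ 2) + π * Real.cosh (π * a) / Real.sinh (π * a) / (2 * a)) := by
  have h := HasSum.zero_add (f := fun n : ℕ => 1 / ((n : ℝ) ^ 2 + a ^ 2))
    (by exact_mod_cast hasSum_one_div_succ_sq_add_sq ha)
  convert h using 1
  have ha2 : a ^ 2 ≠ 0 := pow_ne_zero 2 ha
  simp only [CharP.cast_eq_zero]
  field_simp
  ring

/-- `∑_{n≥0} 1/(n²+1) = 1/2 + (π/2)·(e^π + e^{-π})/(e^π - e^{-π})`. -/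
theorem sum_one_div_sq_add_one :
    HasSum (fun n : ℕ => 1 / ((n : ℝ) ^ 2 + 1))
      (1 / 2 + Real.pi / 2 *
        ((Real.exp Real.pi + Real.exp (-Real.pi))
          / (Real.exp Real.pi - Real.exp (-Real.pi)))) := by
  have h := hasSum_one_div_sq_add_sq one_ne_zero
  simp only [one_pow, mul_one, Real.cosh_eq, Real.sinh_eq] at h
  convert h using 1
  field_simp
end
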